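/- In the one-variable Sl(2)-orbit setting, assume additionally that Λ is discrete (for every R > 0 the set {v ∈ Λ : ‖v‖ ≤ R} is finite). Then for every L ∈ ℝ, the set {v ∈ Λ : ∃ y ≥ 1 such that v is self-dual at y and satisfies the tadpole bound L at y} is finite. (The one-variable Sl(2)-orbit case of Theorem 4: finiteness of self-dual flux vacua; paper §6.1.) -/

import Mathlib

/-! Self-duality `y ^ ℓ • P ℓ v = C (P (-ℓ) v)` with `C` an isometry gives
`y ^ ℓ ‖P ℓ v‖ = ‖P (-ℓ) v‖`, so the `ℓ`-th tadpole term is `‖P ℓ v‖ ‖P (-ℓ) v‖`, at most `L`.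
If `P (-ℓ) v ≠ 0`, the integrality gap `λ ≤ ‖P (-ℓ) v‖` then bounds `‖P ℓ v‖` by `L / λ`; if
`P (-ℓ) v = 0`, self-duality forces `P ℓ v = 0`. Hence every self-dual flux with tadpole at most
`L` has norm at most `#(weights) · L / λ`, uniformly in `y > 0`, and discreteness of `Λ` leaves
only finitely many of them. -/

open Function

theorem norm_finsum_le_card_mul {ι E : Type*} [SeminormedAddCommGroup E] {f : ι → E}
    {s : Finset ι} (hf : support f ⊆ s) {r : ℝ} (hr : ∀ i, ‖f i‖ ≤ r) :
    ‖∑ᶠ i, f i‖ ≤ s.card * r := by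
  rw [finsum_eq_sum_of_support_subset f hf]
  calc ‖∑ i ∈ s, f i‖ ≤ ∑ _i ∈ s, r := norm_sum_le_of_le s fun i _ => hr i
    _ = s.card * r := by rw [Finset.sum_const, nsmul_eq_mul]

section WeightDecomposition

variable {V : Type*} [NormedAddCommGroup V] [NormedSpace ℝ V]

theorem support_apply_subset_support {ι : Type*} (P : ι → V →ₗ[ℝ] V) (v : V) :
    support (fun i => P i v) ⊆ support P :=
  fun i hi hPi => hi (by simp [hPi])

def IsSelfDual (P : ℤ → V →ₗ[ℝ] V) (C : V →ₗ[ℝ] V) (y : ℝ) (v : V) : Prop :=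
  ∀ ℓ : ℤ, y ^ ℓ • P ℓ v = C (P (-ℓ) v)

noncomputable def tadpole (P : ℤ → V →ₗ[ℝ] V) (y : ℝ) (v : V) : ℝ :=
  ∑ᶠ ℓ : ℤ, y ^ ℓ * ‖P ℓ v‖ ^ 2

theorem zpow_mul_sq_norm_le_tadpole {P : ℤ → V →ₗ[ℝ] V} (hP : (support P).Finite) {y : ℝ}
    (hy : 0 < y) (v : V) (ℓ : ℤ) : y ^ ℓ * ‖P ℓ v‖ ^ 2 ≤ tadpole P y v := by
  refine single_le_finsum (f := fun k => y ^ k * ‖P k v‖ ^ 2) ℓ (hP.subset ?_)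
    fun k => by positivity
  exact fun k hk hPk => hk (by simp [hPk])

namespace IsSelfDual

variable {P : ℤ → V →ₗ[ℝ] V} {C : V →ₗ[ℝ] V} {y : ℝ} {v : V}

theorem zpow_mul_norm_eq (h : IsSelfDual P C y v) (hC : ∀ w, ‖C w‖ = ‖w‖) (hy : 0 < y)
    (ℓ : ℤ) : y ^ ℓ * ‖P ℓ v‖ = ‖P (-ℓ) v‖ := by
  rw [← hC (P (-ℓ) v), ← h ℓ, norm_smul, Real.norm_of_nonneg (zpow_pos hy ℓ).le]

theorem norm_mul_norm_neg_le_tadpole (h : IsSelfDual P C y v) (hC : ∀ w, ‖C w‖ = ‖w‖)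
    (hP : (support P).Finite) (hy : 0 < y) (ℓ : ℤ) :
    ‖P ℓ v‖ * ‖P (-ℓ) v‖ ≤ tadpole P y v :=
  calc ‖P ℓ v‖ * ‖P (-ℓ) v‖ = y ^ ℓ * ‖P ℓ v‖ ^ 2 := by
        rw [← h.zpow_mul_norm_eq hC hy]; ring
    _ ≤ tadpole P y v := zpow_mul_sq_norm_le_tadpole hP hy v ℓ

theorem norm_le_tadpole_div (h : IsSelfDual P C y v) (hC : ∀ w, ‖C w‖ = ‖w‖)
    (hP : (support P).Finite) (hy : 0 < y) {lam : ℝ} (hlam : 0 < lam) {ℓ : ℤ}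
    (hgap : P (-ℓ) v = 0 ∨ lam ≤ ‖P (-ℓ) v‖) : ‖P ℓ v‖ ≤ tadpole P y v / lam := by
  have hT := h.norm_mul_norm_neg_le_tadpole hC hP hy ℓ
  rw [le_div_iff₀ hlam]
  rcases hgap with hzero | hlam_le
  · have : ‖P ℓ v‖ = 0 := by
      simpa [hzero, (zpow_pos hy ℓ).ne'] using h.zpow_mul_norm_eq hC hy ℓ
    rw [this, zero_mul]
    exact (mul_nonneg (norm_nonneg _) (norm_nonneg _)).trans hT
  · exact (mul_le_mul_of_nonneg_left hlam_le (norm_nonneg _)).trans hT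

end IsSelfDual

end WeightDecomposition

theorem finiteness_selfdual_one_variable_sl2_general
    (V : Type*) [NormedAddCommGroup V] [InnerProductSpace ℝ V]
    -- the orthogonal weight decomposition V = ⊕_ℓ V_ℓ, via its projections P ℓ
    (P : ℤ → (V →ₗ[ℝ] V))
    (hPfin : (Function.support P).Finite)
    (hPsum : ∀ v : V, ∑ᶠ ℓ : ℤ, P ℓ v = v)
    -- the boundary Weil operator C, a linear isometry with C(V_ℓ) = V_{-ℓ}
    (C : V →ₗ[ℝ] V)
    (hCiso : ∀ v : V, ‖C v‖ = ‖v‖)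
    -- the flux lattice Λ and the integrality gap λ
    (Λ : AddSubgroup V)
    (lam : ℝ) (hlam : 0 < lam)
    (hgap : ∀ v ∈ Λ, ∀ ℓ : ℤ, P ℓ v = 0 ∨ lam ≤ ‖P ℓ v‖)
    -- discreteness of the lattice
    (hdiscrete : ∀ R : ℝ, 0 < R → {v : V | v ∈ Λ ∧ ‖v‖ ≤ R}.Finite)
    (L : ℝ) :
    {v : V | v ∈ Λ ∧ ∃ y : ℝ, 1 ≤ y ∧
      (∀ ℓ : ℤ, y ^ ℓ • P ℓ v = C (P (-ℓ) v)) ∧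
      (∑ᶠ ℓ : ℤ, y ^ ℓ * ‖P ℓ v‖ ^ 2 ≤ L)}.Finite := by
  set s := hPfin.toFinset
  refine (hdiscrete (max 1 (s.card * (L / lam))) (lt_max_of_lt_left one_pos)).subset ?_
  rintro v ⟨hvΛ, y, hy1, hselfDual, htadpole⟩
  have hy : 0 < y := one_pos.trans_le hy1
  have hcomp (ℓ : ℤ) : ‖P ℓ v‖ ≤ L / lam :=
    (IsSelfDual.norm_le_tadpole_div hselfDual hCiso hPfin hy hlam (hgap v hvΛ (-ℓ))).trans
      (div_le_div_of_nonneg_right htadpole hlam.le)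
  have hsupp : support (fun ℓ => P ℓ v) ⊆ s := by
    simpa [s] using support_apply_subset_support P v
  refine ⟨hvΛ, le_max_of_le_right ?_⟩
  rw [← hPsum v]
  exact norm_finsum_le_card_mul hsupp hcomp

/-- One-variable Sl(2)-orbit case of the finiteness of self-dual flux vacua: if the flux
lattice `Λ` is discrete, then for every tadpole bound `L` only finitely many fluxes
`v ∈ Λ` are self-dual and satisfy the tadpole bound at some saxion value `y ≥ 1`. -/
theorem finiteness_selfdual_one_variable_sl2
    (V : Type*) [NormedAddCommGroup V] [InnerProductSpace ℝ V] [FiniteDimensional ℝ V]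
    -- the orthogonal weight decomposition V = ⊕_ℓ V_ℓ, via its projections P ℓ
    (P : ℤ → (V →ₗ[ℝ] V))
    (hPfin : (Function.support P).Finite)
    (hPsum : ∀ v : V, ∑ᶠ ℓ : ℤ, P ℓ v = v)
    (hPproj : ∀ (ℓ : ℤ) (v : V), P ℓ (P ℓ v) = P ℓ v)
    (hPorth : ∀ ℓ ℓ' : ℤ, ℓ ≠ ℓ' → ∀ u w : V, (inner ℝ (P ℓ u) (P ℓ' w) : ℝ) = 0)
    -- the boundary Weil operator C, a linear isometry with C(V_ℓ) = V_{-ℓ}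
    (C : V →ₗ[ℝ] V)
    (hCiso : ∀ v : V, ‖C v‖ = ‖v‖)
    (hCw : ∀ ℓ : ℤ, Submodule.map C (LinearMap.range (P ℓ)) = LinearMap.range (P (-ℓ)))
    -- the flux lattice Λ and the integrality gap λ
    (Λ : AddSubgroup V)
    (lam : ℝ) (hlam : 0 < lam)
    (hgap : ∀ v ∈ Λ, ∀ ℓ : ℤ, P ℓ v = 0 ∨ lam ≤ ‖P ℓ v‖)
    -- discreteness of the lattice
    (hdiscrete : ∀ R : ℝ, 0 < R → {v : V | v ∈ Λ ∧ ‖v‖ ≤ R}.Finite)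
    (L : ℝ) :
    {v : V | v ∈ Λ ∧ ∃ y : ℝ, 1 ≤ y ∧
      (∀ ℓ : ℤ, y ^ ℓ • P ℓ v = C (P (-ℓ) v)) ∧
      (∑ᶠ ℓ : ℤ, y ^ ℓ * ‖P ℓ v‖ ^ 2 ≤ L)}.Finite :=
  finiteness_selfdual_one_variable_sl2_general V P hPfin hPsum C hCiso Λ lam hlam hgap hdiscrete L
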